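/- Let x ∈ X with T^{-1}(x) ∉ A and κ(x) = s_0 ≥ 5, where κ counts leading zeros. Define n_0 = 0, s_p = κ(T^{n_p}(x)), n_{p+1} = n_p + 2^{s_p}, assuming all s_p are finite. Then for every k ≥ 5 and every p ≥ 0, the number of indices i with n_p ≤ i < n_{p+1} and T^i(x) ∈ E_k is at most 2^{s_p} · (k+2)/2^k, where E_k = ⋃_{i=k+1}^{∞} ⋃_{j=0}^{i-1} T^j([0^i]). -/

import Mathlib

/-!
Read the first `m` digits of `y` as the number `DN m y < 2 ^ m`. The odometer adds one to it
modulo `2 ^ m`, and `T^j([0^m]) = {y | DN m y = j}` for `j < 2 ^ m`, so `y ∈ E_k` iff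
`DN m y < m` for some `m > k`. If `κ(y) = s < m` then `DN m y ≡ 2 ^ s [MOD 2 ^ (s + 1)]`, so adding
anything up to `2 ^ s` to `DN m y` does not wrap around modulo `2 ^ m`. Starting from
`T⁻¹ x ∉ A`, induction on `p` gives `DN m (T^{n_p} x) ≥ m` whenever `m ≥ 5` and `m > s_p`.
In the block `n_p ≤ i < n_p + 2 ^ s_p` only the scales `k < m ≤ s_p` can therefore put `T^i x`
into `E_k`, each for at most `m · 2 ^ (s_p - m)` indices, and `∑_{m > k} m / 2 ^ m = (k + 2) / 2 ^ k`.
-/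

open MeasureTheory Filter Topology
open scoped ENNReal

/-- The odometer map on `X = {0,1}^ℕ` (adding one with carry in binary). -/
def Tod (x : ℕ → Bool) : ℕ → Bool := fun k =>
  if ∀ i < k, x i = true then !(x k) else x k

/-- The inverse of the odometer map (subtracting one with borrow). -/
def TodInv (x : ℕ → Bool) : ℕ → Bool := fun k =>
  if ∀ i < k, x i = false then !(x k) else x k

/-- The number determined by the first `k` binary digits of `x`. -/
def DN (k : ℕ) (x : ℕ → Bool) : ℕ := ∑ i ∈ Finset.range k, 2 ^ i * (x i).toNat

/-- The cylinder `[0^i]` of sequences starting with `i` zeros. -/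
def cyl0 (i : ℕ) : Set (ℕ → Bool) := {x | ∀ j < i, x j = false}

/-- `A = ⋃_{i=5}^∞ ⋃_{j=0}^{i-1} T^j([0^i])`. -/
def Aset : Set (ℕ → Bool) := ⋃ (i : ℕ) (_ : 5 ≤ i) (j : ℕ) (_ : j < i), Tod^[j] '' cyl0 i

/-- `A_k = ⋃_{i=5}^{k} ⋃_{j=0}^{i-1} T^j([0^i])`. -/
def Ak (k : ℕ) : Set (ℕ → Bool) :=
  ⋃ (i : ℕ) (_ : 5 ≤ i) (_ : i ≤ k) (j : ℕ) (_ : j < i), Tod^[j] '' cyl0 i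

/-- `E_k = ⋃_{i=k+1}^∞ ⋃_{j=0}^{i-1} T^j([0^i])`. -/
def Ek (k : ℕ) : Set (ℕ → Bool) :=
  ⋃ (i : ℕ) (_ : k + 1 ≤ i) (j : ℕ) (_ : j < i), Tod^[j] '' cyl0 i

lemma DN_succ (k : ℕ) (x : ℕ → Bool) : DN (k + 1) x = DN k x + 2 ^ k * (x k).toNat :=
  Finset.sum_range_succ _ _

lemma DN_lt_two_pow (k : ℕ) (x : ℕ → Bool) : DN k x < 2 ^ k := by
  induction k with
  | zero => simp [DN]
  | succ k ih =>
    rw [DN_succ, pow_succ]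
    cases x k <;> simp only [Bool.toNat_false, Bool.toNat_true, mul_zero, mul_one] <;> omega

lemma DN_eq_zero_iff (k : ℕ) (x : ℕ → Bool) : DN k x = 0 ↔ x ∈ cyl0 k := by
  simp [DN, cyl0, Finset.sum_eq_zero_iff]

lemma DN_add_one_eq_two_pow_iff (k : ℕ) (x : ℕ → Bool) :
    DN k x + 1 = 2 ^ k ↔ ∀ i < k, x i = true := by
  induction k with
  | zero => simp [DN]
  | succ k ih =>
    have := DN_lt_two_pow k x
    rw [Nat.forall_lt_succ_right, ← ih, DN_succ, pow_succ]
    cases x k <;>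
      simp only [Bool.toNat_false, Bool.toNat_true, mul_zero, mul_one, Bool.false_eq_true,
        and_true, and_false, iff_false, add_zero] <;>
      omega

lemma DN_mod_two_pow {m' m : ℕ} (h : m' ≤ m) (x : ℕ → Bool) : DN m x % 2 ^ m' = DN m' x := by
  induction m, h using Nat.le_induction with
  | base => exact Nat.mod_eq_of_lt (DN_lt_two_pow m' x)
  | succ m hm ih =>
    obtain ⟨c, hc⟩ := pow_dvd_pow 2 hm
    rw [DN_succ, hc, mul_assoc, Nat.add_mul_mod_self_left, ih]

lemma DN_Tod (k : ℕ) (x : ℕ → Bool) : DN k (Tod x) = (DN k x + 1) % 2 ^ k := by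
  induction k with
  | zero => simp [DN]
  | succ k ih =>
    have hlt := DN_lt_two_pow k x
    rw [DN_succ, DN_succ, ih, pow_succ]
    by_cases hcarry : ∀ i < k, x i = true
    · have hTod : Tod x k = !x k := if_pos hcarry
      have hfull := (DN_add_one_eq_two_pow_iff k x).2 hcarry
      rw [hTod, hfull, Nat.mod_self]
      cases x k
      · simp only [Bool.not_false, Bool.toNat_true, Bool.toNat_false]
        rw [Nat.mod_eq_of_lt] <;> omega
      · simp only [Bool.not_true, Bool.toNat_true, Bool.toNat_false]
        rw [show DN k x + 2 ^ k * 1 + 1 = 2 ^ k * 2 by omega, Nat.mod_self,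
          mul_zero, add_zero]
    · have hTod : Tod x k = x k := if_neg hcarry
      rw [← DN_add_one_eq_two_pow_iff] at hcarry
      rw [hTod, Nat.mod_eq_of_lt (by omega)]
      cases x k <;> simp only [Bool.toNat_false, Bool.toNat_true, mul_zero, mul_one] <;>
        rw [Nat.mod_eq_of_lt] <;> omega

lemma DN_iterate_Tod (k n : ℕ) (x : ℕ → Bool) : DN k (Tod^[n] x) = (DN k x + n) % 2 ^ k := by
  induction n with
  | zero => exact (Nat.mod_eq_of_lt (DN_lt_two_pow k x)).symm
  | succ n ih => rw [Function.iterate_succ_apply', DN_Tod, ih, Nat.mod_add_mod, add_assoc]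

lemma DN_iterate_Tod_of_lt {k n : ℕ} {x : ℕ → Bool} (h : DN k x + n < 2 ^ k) :
    DN k (Tod^[n] x) = DN k x + n := by
  rw [DN_iterate_Tod, Nat.mod_eq_of_lt h]

lemma DN_iterate_Tod_of_le {k n : ℕ} {x : ℕ → Bool} (h : DN k x + n ≤ 2 ^ k)
    (hne : DN k (Tod^[n] x) ≠ 0) : DN k (Tod^[n] x) = DN k x + n := by
  rcases h.lt_or_eq with hlt | heq
  · exact DN_iterate_Tod_of_lt hlt
  · rw [DN_iterate_Tod, heq, Nat.mod_self] at hne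
    exact absurd rfl hne

lemma TodInv_forall_lt_eq_true_iff (x : ℕ → Bool) (k : ℕ) :
    (∀ i < k, TodInv x i = true) ↔ ∀ i < k, x i = false := by
  induction k with
  | zero => simp
  | succ k ih =>
    rw [Nat.forall_lt_succ_right, Nat.forall_lt_succ_right, ih]
    by_cases hborrow : ∀ i < k, x i = false
    · have hInv : TodInv x k = !x k := if_pos hborrow
      simp [hInv]
    · simp [hborrow]

lemma Tod_TodInv (x : ℕ → Bool) : Tod (TodInv x) = x := by
  funext k
  by_cases hborrow : ∀ i < k, x i = false
  · have hInv : TodInv x k = !x k := if_pos hborrow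
    have hcarry := (TodInv_forall_lt_eq_true_iff x k).2 hborrow
    simp only [Tod, if_pos hcarry, hInv, Bool.not_not]
  · have hInv : TodInv x k = x k := if_neg hborrow
    have hcarry := mt (TodInv_forall_lt_eq_true_iff x k).1 hborrow
    simp only [Tod, if_neg hcarry, hInv]

lemma Tod_surjective : Function.Surjective Tod :=
  Function.LeftInverse.surjective Tod_TodInv

lemma mem_iterate_Tod_image_cyl0_iff {m j : ℕ} (hj : j < 2 ^ m) (y : ℕ → Bool) :
    y ∈ Tod^[j] '' cyl0 m ↔ DN m y = j := by
  constructor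
  · rintro ⟨z, hz, rfl⟩
    rw [DN_iterate_Tod, (DN_eq_zero_iff m z).2 hz, zero_add, Nat.mod_eq_of_lt hj]
  · intro hy
    obtain ⟨z, rfl⟩ := Tod_surjective.iterate j y
    refine ⟨z, ?_, rfl⟩
    rw [← DN_eq_zero_iff, ← Nat.mod_eq_of_lt (DN_lt_two_pow m z)]
    have hmod : DN m z + j ≡ 0 + j [MOD 2 ^ m] := by
      rw [zero_add, Nat.ModEq, ← DN_iterate_Tod, hy, Nat.mod_eq_of_lt hj]
    exact Nat.ModEq.add_right_cancel' j hmod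

lemma biUnion_iterate_Tod_image_cyl0 (m : ℕ) :
    ⋃ (j : ℕ) (_ : j < m), Tod^[j] '' cyl0 m = {y | DN m y < m} := by
  ext y
  simp only [Set.mem_iUnion, Set.mem_ofPred_eq, exists_prop]
  constructor
  · rintro ⟨j, hj, hy⟩
    rwa [(mem_iterate_Tod_image_cyl0_iff (hj.trans m.lt_two_pow_self) y).1 hy]
  · intro hy
    exact ⟨DN m y, hy, (mem_iterate_Tod_image_cyl0_iff (DN_lt_two_pow m y) y).2 rfl⟩

lemma mem_Ek_iff (k : ℕ) (y : ℕ → Bool) : y ∈ Ek k ↔ ∃ m, k + 1 ≤ m ∧ DN m y < m := by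
  simp only [Ek, biUnion_iterate_Tod_image_cyl0, Set.mem_iUnion, Set.mem_ofPred_eq, exists_prop]

lemma mem_Aset_iff (y : ℕ → Bool) : y ∈ Aset ↔ ∃ m, 5 ≤ m ∧ DN m y < m := by
  simp only [Aset, biUnion_iterate_Tod_image_cyl0, Set.mem_iUnion, Set.mem_ofPred_eq, exists_prop]

/-- `IsLeadingZeroCount s y` says that `κ(y) = s`. -/
def IsLeadingZeroCount (s : ℕ) (y : ℕ → Bool) : Prop :=
  (∀ i < s, y i = false) ∧ y s = true

namespace IsLeadingZeroCount

variable {s m : ℕ} {y : ℕ → Bool}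

lemma DN_eq_zero (hy : IsLeadingZeroCount s y) (hm : m ≤ s) : DN m y = 0 :=
  (DN_eq_zero_iff m y).2 fun i hi => hy.1 i (hi.trans_le hm)

lemma DN_mod_two_pow_succ (hy : IsLeadingZeroCount s y) (hm : s < m) :
    DN m y % 2 ^ (s + 1) = 2 ^ s := by
  rw [DN_mod_two_pow hm, DN_succ, hy.DN_eq_zero le_rfl, hy.2]
  simp

lemma DN_ne_zero (hy : IsLeadingZeroCount s y) (hm : s < m) : DN m y ≠ 0 := by
  intro h0
  have := hy.DN_mod_two_pow_succ hm
  rw [h0, Nat.zero_mod] at this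
  exact (pow_pos two_pos s).ne this

lemma DN_add_two_pow_le (hy : IsLeadingZeroCount s y) (hm : s < m) :
    DN m y + 2 ^ s ≤ 2 ^ m := by
  have hmod := hy.DN_mod_two_pow_succ hm
  have hlt := DN_lt_two_pow m y
  have hpow : 2 ^ (s + 1) = 2 ^ s + 2 ^ s := by rw [pow_succ]; ring
  refine Nat.le_of_lt_add_of_dvd (n := 2 ^ (s + 1)) (by omega) ?_ (pow_dvd_pow 2 hm)
  rw [Nat.dvd_iff_mod_eq_zero, Nat.add_mod, hmod, Nat.mod_eq_of_lt (by omega : 2 ^ s < 2 ^ (s + 1)),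
    ← hpow, Nat.mod_self]

end IsLeadingZeroCount

lemma le_DN_Tod_of_notMem_Aset {y : ℕ → Bool} {s m : ℕ} (hy : y ∉ Aset)
    (hTy : IsLeadingZeroCount s (Tod y)) (h5 : 5 ≤ m) (hm : s < m) : m ≤ DN m (Tod y) := by
  have hle : m ≤ DN m y := by
    rw [mem_Aset_iff] at hy
    push Not at hy
    exact hy m h5
  have hstep : DN m (Tod^[1] y) = DN m y + 1 :=
    DN_iterate_Tod_of_le (DN_lt_two_pow m y) (hTy.DN_ne_zero hm)
  rw [Function.iterate_one] at hstep
  omega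

lemma le_DN_iterate_two_pow {y : ℕ → Bool} {s s' m : ℕ} (hy : IsLeadingZeroCount s y)
    (hy' : IsLeadingZeroCount s' (Tod^[2 ^ s] y)) (hm : s' < m) (ih : s < m → m ≤ DN m y) :
    m ≤ DN m (Tod^[2 ^ s] y) := by
  have hne := hy'.DN_ne_zero hm
  have hsm : s < m := by
    by_contra! hms
    apply hne
    rw [DN_iterate_Tod, hy.DN_eq_zero hms, zero_add]
    exact Nat.mod_eq_zero_of_dvd (pow_dvd_pow 2 hms)
  rw [DN_iterate_Tod_of_le (hy.DN_add_two_pow_le hsm) hne]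
  exact (ih hsm).trans (Nat.le_add_right _ _)

lemma le_DN_iterate_of_recursion {x : ℕ → Bool} {s nn : ℕ → ℕ}
    (hpre : ∀ y, Tod y = x → y ∉ Aset) (hn0 : nn 0 = 0)
    (hκ : ∀ p, IsLeadingZeroCount (s p) (Tod^[nn p] x))
    (hrec : ∀ p, nn (p + 1) = nn p + 2 ^ s p) (p : ℕ) :
    ∀ m, 5 ≤ m → s p < m → m ≤ DN m (Tod^[nn p] x) := by
  induction p with
  | zero =>
    intro m h5 hm
    obtain ⟨y, rfl⟩ := Tod_surjective x
    have h0 := hκ 0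
    rw [hn0, Function.iterate_zero_apply] at h0 ⊢
    exact le_DN_Tod_of_notMem_Aset (hpre y rfl) h0 h5 hm
  | succ p ih =>
    intro m h5 hm
    have hnext := hκ (p + 1)
    rw [hrec, add_comm (nn p), Function.iterate_add_apply] at hnext ⊢
    exact le_DN_iterate_two_pow (hκ p) hnext hm (ih m h5)

lemma exists_mod_lt_of_iterate_mem_Ek {y : ℕ → Bool} {s k t : ℕ} (hy : IsLeadingZeroCount s y)
    (hinv : ∀ m, 5 ≤ m → s < m → m ≤ DN m y) (hk : 4 ≤ k) (ht : t < 2 ^ s)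
    (hE : Tod^[t] y ∈ Ek k) : ∃ m ∈ Finset.Ioc k s, t % 2 ^ m < m := by
  obtain ⟨m, hkm, hlt⟩ := (mem_Ek_iff k _).1 hE
  by_cases hms : m ≤ s
  · refine ⟨m, Finset.mem_Ioc.2 ⟨hkm, hms⟩, ?_⟩
    rwa [DN_iterate_Tod, hy.DN_eq_zero hms, zero_add] at hlt
  · push Not at hms
    have hno_carry : DN m y + t < 2 ^ m := by
      have := hy.DN_add_two_pow_le hms
      omega
    rw [DN_iterate_Tod_of_lt hno_carry] at hlt
    have := hinv m (by omega) hms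
    omega

lemma card_filter_mod_lt_le (a N r : ℕ) :
    ((Finset.range (a * N)).filter (fun t => t % N < r)).card ≤ r * a := by
  calc _ ≤ (Finset.range r ×ˢ Finset.range a).card := ?_
    _ = r * a := by simp
  refine Finset.card_le_card_of_injOn (fun t => (t % N, t / N)) ?_ ?_
  · intro t ht
    simp only [Finset.coe_filter, Finset.mem_range, Set.mem_ofPred_eq] at ht
    simp only [Finset.coe_product, Finset.coe_range, Set.mem_prod, Set.mem_Iio]
    exact ⟨ht.2, Nat.div_lt_of_lt_mul (by rw [mul_comm]; exact ht.1)⟩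
  · intro t _ t' _ h
    simp only [Prod.mk.injEq] at h
    rw [← Nat.mod_add_div t N, ← Nat.mod_add_div t' N, h.1, h.2]

lemma ncard_iterate_mem_Ek_le {y : ℕ → Bool} {s k : ℕ} (hy : IsLeadingZeroCount s y)
    (hinv : ∀ m, 5 ≤ m → s < m → m ≤ DN m y) (hk : 4 ≤ k) :
    {t | t < 2 ^ s ∧ Tod^[t] y ∈ Ek k}.ncard ≤ ∑ m ∈ Finset.Ioc k s, m * 2 ^ (s - m) := by
  classical
  let covering := (Finset.Ioc k s).biUnion
    fun m => (Finset.range (2 ^ (s - m) * 2 ^ m)).filter (fun t => t % 2 ^ m < m)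
  have hsub : {t | t < 2 ^ s ∧ Tod^[t] y ∈ Ek k} ⊆ covering := by
    rintro t ⟨ht, hE⟩
    obtain ⟨m, hm, hmod⟩ := exists_mod_lt_of_iterate_mem_Ek hy hinv hk ht hE
    have hpow : 2 ^ (s - m) * 2 ^ m = 2 ^ s := by
      rw [← pow_add, Nat.sub_add_cancel (Finset.mem_Ioc.1 hm).2]
    simp only [covering, Finset.coe_biUnion, Set.mem_iUnion, Finset.coe_filter,
      Finset.mem_range]
    exact ⟨m, hm, hpow ▸ ht, hmod⟩
  calc {t | t < 2 ^ s ∧ Tod^[t] y ∈ Ek k}.ncard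
      ≤ covering.card := by
        rw [← Set.ncard_coe_finset]
        exact Set.ncard_le_ncard hsub (Finset.finite_toSet _)
    _ ≤ _ := Finset.card_biUnion_le
    _ ≤ _ := Finset.sum_le_sum fun m _ => card_filter_mod_lt_le _ _ _

lemma sum_Ioc_mul_two_pow_sub_add {k s : ℕ} (h : k ≤ s) :
    ∑ m ∈ Finset.Ioc k s, m * 2 ^ (s - m) + (s + 2) = (k + 2) * 2 ^ (s - k) := by
  induction s, h using Nat.le_induction with
  | base => simp
  | succ s hks ih =>
    have hdouble : ∑ m ∈ Finset.Ioc k s, m * 2 ^ (s + 1 - m)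
        = 2 * ∑ m ∈ Finset.Ioc k s, m * 2 ^ (s - m) := by
      rw [Finset.mul_sum]
      refine Finset.sum_congr rfl fun m hm => ?_
      rw [Nat.sub_add_comm (Finset.mem_Ioc.1 hm).2, pow_succ]
      ring
    rw [Finset.sum_Ioc_succ_top hks, hdouble, Nat.sub_add_comm hks, pow_succ, ← mul_assoc, ← ih,
      Nat.sub_self, pow_zero]
    ring

lemma sum_Ioc_mul_two_pow_sub_le (k s : ℕ) :
    ((∑ m ∈ Finset.Ioc k s, m * 2 ^ (s - m) : ℕ) : ℝ) ≤ 2 ^ s * ((k : ℝ) + 2) / 2 ^ k := by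
  rcases le_or_gt k s with hks | hsk
  · have hnat : ∑ m ∈ Finset.Ioc k s, m * 2 ^ (s - m) ≤ (k + 2) * 2 ^ (s - k) := by
      rw [← sum_Ioc_mul_two_pow_sub_add hks]
      exact Nat.le_add_right _ _
    calc ((∑ m ∈ Finset.Ioc k s, m * 2 ^ (s - m) : ℕ) : ℝ)
        ≤ ((k + 2) * 2 ^ (s - k) : ℕ) := by exact_mod_cast hnat
      _ = 2 ^ s * ((k : ℝ) + 2) / 2 ^ k := by
        push_cast
        rw [pow_sub₀ _ two_ne_zero hks]
        ring
  · rw [Finset.Ioc_eq_empty (by omega), Finset.sum_empty, Nat.cast_zero]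
    positivity

lemma ncard_window_eq {P : ℕ → Prop} (n L : ℕ) :
    {i | n ≤ i ∧ i < n + L ∧ P i}.ncard = {t | t < L ∧ P (t + n)}.ncard := by
  have hwindow : {i | n ≤ i ∧ i < n + L ∧ P i} = (· + n) '' {t | t < L ∧ P (t + n)} := by
    ext i
    constructor
    · rintro ⟨hni, hiL, hP⟩
      exact ⟨i - n, ⟨by omega, by rwa [Nat.sub_add_cancel hni]⟩, Nat.sub_add_cancel hni⟩
    · rintro ⟨t, ⟨htL, hP⟩, rfl⟩
      exact ⟨Nat.le_add_left n t, by dsimp only; omega, hP⟩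
  rw [hwindow, Set.ncard_image_of_injective _ (add_left_injective n)]

theorem stmt7_general (x : ℕ → Bool)
    (hpre : ∀ y, Tod y = x → y ∉ Aset)
    (s nn : ℕ → ℕ)
    (hn0 : nn 0 = 0)
    (hκ : ∀ p, (∀ i < s p, Tod^[nn p] x i = false) ∧ Tod^[nn p] x (s p) = true)
    (hrec : ∀ p, nn (p + 1) = nn p + 2 ^ s p) :
    ∀ k, 5 ≤ k → ∀ p,
      (({i : ℕ | nn p ≤ i ∧ i < nn (p + 1) ∧ Tod^[i] x ∈ Ek k}.ncard : ℝ)) ≤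
        2 ^ s p * ((k : ℝ) + 2) / 2 ^ k := by
  intro k hk p
  have hinv := le_DN_iterate_of_recursion hpre hn0 hκ hrec p
  have hcount := ncard_iterate_mem_Ek_le (hκ p) hinv (by omega : 4 ≤ k)
  simp only [← Function.iterate_add_apply] at hcount
  rw [hrec, ncard_window_eq]
  exact (Nat.cast_le.2 hcount).trans (sum_Ioc_mul_two_pow_sub_le k (s p))

/-- in the setting of the recursively defined times `n_p`, for every `k ≥ 5`
and every `p`, the number of indices `n_p ≤ i < n_{p+1}` with `T^i(x) ∈ E_k` is at most
`2^{s_p} · (k+2)/2^k`. -/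
theorem stmt7 (x : ℕ → Bool)
    (hpre : ∀ y, Tod y = x → y ∉ Aset)
    (s nn : ℕ → ℕ)
    (hn0 : nn 0 = 0)
    (hs0 : 5 ≤ s 0)
    (hκ : ∀ p, (∀ i < s p, Tod^[nn p] x i = false) ∧ Tod^[nn p] x (s p) = true)
    (hrec : ∀ p, nn (p + 1) = nn p + 2 ^ s p) :
    ∀ k, 5 ≤ k → ∀ p,
      (({i : ℕ | nn p ≤ i ∧ i < nn (p + 1) ∧ Tod^[i] x ∈ Ek k}.ncard : ℝ)) ≤
        2 ^ s p * ((k : ℝ) + 2) / 2 ^ k :=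
  stmt7_general x hpre s nn hn0 hκ hrec
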